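/- arXiv:2312.05575 — 2 statements merged into one kernel-verified Lean document; each statement's English description precedes it below -/
import Mathlib

section
/- Let ω : ℝ → ℝ be continuous with |ω(t)| ≤ K(1 + t²) for all t ∈ ℝ and some K > 0, and suppose ω(t)/t → 0 as t → +∞. Define O_s := ω(s) − ∫_{−∞}^s e^{r−s} ω(r) dr for s ∈ ℝ. Then (1/t) ∫_0^t O_s ds → 0 as t → +∞. -/
open MeasureTheory Real Filter Set Topology

/-!
Write `A s := ∫_{-∞}^s e^{r-s} ω(r) dr`, the exponential moving average of `ω`, so that
`O = ω - A`. Since `A s = e^{-s} ∫_{-∞}^s e^r ω(r) dr`, the fundamental theorem of calculus gives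
`A' = ω - A = O`, hence `∫_0^t O = A t - A 0`, and it suffices to show `A t = o(t)`.
For `t ≥ M` one has `A t = e^{M-t} A M + ∫_M^t e^{r-t} ω(r) dr`, where the kernel `e^{r-t}` has
mass at most `1` on `[M, t]`; choosing `M` with `|ω r| ≤ ε r` for `r ≥ M` gives
`|A t| ≤ |A M| + ε t`.
-/

lemma integrableOn_exp_mul_one_add_sq_Iic (c : ℝ) :
    IntegrableOn (fun r => exp r * (1 + r ^ 2)) (Iic c) := by
  have hsq : IntegrableOn (fun r : ℝ => id r ^ 2 * exp (1 * id r)) (Iic c) :=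
    ProbabilityTheory.integrable_pow_mul_exp_of_integrable_exp_mul (t := 1 / 2) (by norm_num)
      (integrableOn_exp_mul_Iic (by norm_num) c) (integrableOn_exp_mul_Iic (by norm_num) c) 2
  refine ((integrableOn_exp_Iic c).add hsq).congr_fun (fun r _ => ?_) measurableSet_Iic
  simp only [Pi.add_apply, id, one_mul]
  ring

lemma integrableOn_exp_mul_Iic_of_abs_le {ω : ℝ → ℝ} (hω : AEStronglyMeasurable ω) {K : ℝ}
    (hbd : ∀ t, |ω t| ≤ K * (1 + t ^ 2)) (c : ℝ) :
    IntegrableOn (fun r => exp r * ω r) (Iic c) := by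
  refine ((integrableOn_exp_mul_one_add_sq_Iic c).const_mul K).mono'
    (continuous_exp.aestronglyMeasurable.mul hω).restrict (ae_of_all _ fun r => ?_)
  rw [norm_mul, norm_of_nonneg (exp_pos r).le, norm_eq_abs, mul_left_comm]
  exact mul_le_mul_of_nonneg_left (hbd r) (exp_pos r).le

lemma hasDerivAt_integral_Iic {E : Type*} [NormedAddCommGroup E] [NormedSpace ℝ E]
    [CompleteSpace E] {f : ℝ → E} (hf : Continuous f) (hint : ∀ c, IntegrableOn f (Iic c))
    (s : ℝ) : HasDerivAt (fun u => ∫ r in Iic u, f r) (f s) s := by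
  have hsplit :
      (fun u => ∫ r in Iic u, f r) = fun u => (∫ r in Iic s, f r) + ∫ r in s..u, f r := by
    funext u
    rw [← intervalIntegral.integral_Iic_sub_Iic (hint s) (hint u), add_sub_cancel]
  rw [hsplit]
  exact (intervalIntegral.integral_hasDerivAt_right (hf.intervalIntegrable s s)
    (hf.stronglyMeasurableAtFilter volume (𝓝 s)) hf.continuousAt).const_add _

noncomputable def expMovingAverage (ω : ℝ → ℝ) (s : ℝ) : ℝ :=
  ∫ r in Iic s, exp (r - s) * ω r

lemma expMovingAverage_eq (ω : ℝ → ℝ) (s : ℝ) :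
    expMovingAverage ω s = exp (-s) * ∫ r in Iic s, exp r * ω r := by
  rw [expMovingAverage, ← integral_const_mul]
  congr 1 with r
  rw [sub_eq_add_neg, exp_add]
  ring

lemma hasDerivAt_expMovingAverage {ω : ℝ → ℝ} (hω : Continuous ω)
    (hint : ∀ c, IntegrableOn (fun r => exp r * ω r) (Iic c)) (s : ℝ) :
    HasDerivAt (expMovingAverage ω) (ω s - expMovingAverage ω s) s := by
  have h : HasDerivAt (fun u => exp (-u) * ∫ r in Iic u, exp r * ω r)
      (exp (-s) * -1 * (∫ r in Iic s, exp r * ω r) + exp (-s) * (exp s * ω s)) s :=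
    (hasDerivAt_neg s).exp.mul (hasDerivAt_integral_Iic (continuous_exp.mul hω) hint s)
  rw [funext (expMovingAverage_eq ω)]
  refine h.congr_deriv ?_
  rw [← mul_assoc, ← exp_add, neg_add_cancel, exp_zero]
  ring

lemma expMovingAverage_eq_add_intervalIntegral {ω : ℝ → ℝ}
    (hint : ∀ c, IntegrableOn (fun r => exp r * ω r) (Iic c)) (M t : ℝ) :
    expMovingAverage ω t =
      exp (M - t) * expMovingAverage ω M + ∫ r in M..t, exp (r - t) * ω r := by
  have hsplit := intervalIntegral.integral_Iic_sub_Iic (hint M) (hint t)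
  have hshift : ∫ r in M..t, exp (r - t) * ω r = exp (-t) * ∫ r in M..t, exp r * ω r := by
    rw [← intervalIntegral.integral_const_mul]
    congr 1 with r
    rw [sub_eq_add_neg, exp_add]
    ring
  have hexp : exp (M - t) * exp (-M) = exp (-t) := by rw [← exp_add]; ring_nf
  simp only [expMovingAverage_eq]
  rw [hshift, ← hsplit, ← mul_assoc, hexp]
  ring

lemma abs_expMovingAverage_le {ω : ℝ → ℝ} (hω : Continuous ω)
    (hint : ∀ c, IntegrableOn (fun r => exp r * ω r) (Iic c)) {M t ε : ℝ} (hMt : M ≤ t)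
    (hbound : ∀ r ∈ Icc M t, |ω r| ≤ ε) :
    |expMovingAverage ω t| ≤ |expMovingAverage ω M| + ε := by
  have hdecay : |exp (M - t) * expMovingAverage ω M| ≤ |expMovingAverage ω M| := by
    rw [abs_mul, abs_of_pos (exp_pos _)]
    exact mul_le_of_le_one_left (abs_nonneg _) (exp_le_one_iff.2 (sub_nonpos.2 hMt))
  have hkernel : ∫ r in M..t, exp (r - t) * ε = (1 - exp (M - t)) * ε := by
    rw [intervalIntegral.integral_mul_const, intervalIntegral.integral_comp_sub_right exp,
      integral_exp, sub_self, exp_zero]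
  have hforced : |∫ r in M..t, exp (r - t) * ω r| ≤ (1 - exp (M - t)) * ε :=
    calc |∫ r in M..t, exp (r - t) * ω r|
        ≤ ∫ r in M..t, |exp (r - t) * ω r| := intervalIntegral.abs_integral_le_integral_abs hMt
      _ ≤ ∫ r in M..t, exp (r - t) * ε := by
          refine intervalIntegral.integral_mono_on hMt
            (Continuous.intervalIntegrable (by fun_prop) _ _)
            (Continuous.intervalIntegrable (by fun_prop) _ _) fun r hr => ?_
          rw [abs_mul, abs_of_pos (exp_pos _)]
          exact mul_le_mul_of_nonneg_left (hbound r hr) (exp_pos _).le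
      _ = (1 - exp (M - t)) * ε := hkernel
  have hε : 0 ≤ ε := (abs_nonneg _).trans (hbound M ⟨le_rfl, hMt⟩)
  rw [expMovingAverage_eq_add_intervalIntegral hint M t]
  linarith [abs_add_le (exp (M - t) * expMovingAverage ω M) (∫ r in M..t, exp (r - t) * ω r),
    mul_nonneg (exp_pos (M - t)).le hε]

lemma tendsto_expMovingAverage_div_atTop {ω : ℝ → ℝ} (hω : Continuous ω)
    (hint : ∀ c, IntegrableOn (fun r => exp r * ω r) (Iic c))
    (hsub : Tendsto (fun t => ω t / t) atTop (𝓝 0)) :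
    Tendsto (fun t => expMovingAverage ω t / t) atTop (𝓝 0) := by
  have hωo : ω =o[atTop] id := (Asymptotics.isLittleO_iff_tendsto'
    ((eventually_ne_atTop 0).mono fun t ht h => absurd h ht)).2 hsub
  refine Asymptotics.IsLittleO.tendsto_div_nhds_zero (g := id) ?_
  refine Asymptotics.isLittleO_iff.2 fun ε hε => ?_
  obtain ⟨M, hM⟩ := eventually_atTop.1 ((hωo.def (half_pos hε)).and (eventually_ge_atTop 0))
  filter_upwards [eventually_ge_atTop M, eventually_ge_atTop (2 * |expMovingAverage ω M| / ε)]
    with t htM htA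
  have ht : 0 ≤ t := (hM M le_rfl).2.trans htM
  have hbound : ∀ r ∈ Icc M t, |ω r| ≤ ε / 2 * t := fun r hr => by
    have := (hM r hr.1).1
    rw [norm_eq_abs, norm_eq_abs, id, abs_of_nonneg ((hM M le_rfl).2.trans hr.1)] at this
    nlinarith [hr.2]
  have hA : |expMovingAverage ω M| ≤ ε / 2 * t := by
    rw [div_le_iff₀ hε] at htA
    linarith
  rw [norm_eq_abs, norm_eq_abs, id, abs_of_nonneg ht]
  linarith [abs_expMovingAverage_le hω hint htM hbound]

theorem stmt_4_general (ω : ℝ → ℝ) (hω : Continuous ω) (K : ℝ)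
    (hbd : ∀ t : ℝ, |ω t| ≤ K * (1 + t ^ 2))
    (hsub : Tendsto (fun t : ℝ => ω t / t) atTop (nhds 0))
    (O : ℝ → ℝ)
    (hO : ∀ s : ℝ, O s = ω s - ∫ r in Set.Iic s, Real.exp (r - s) * ω r) :
    Tendsto (fun t : ℝ => (1 / t) * ∫ s in (0:ℝ)..t, O s) atTop (nhds 0) := by
  have hint := integrableOn_exp_mul_Iic_of_abs_le hω.aestronglyMeasurable hbd
  have hderiv : ∀ s, HasDerivAt (expMovingAverage ω) (O s) s := fun s => by
    rw [hO s]
    exact hasDerivAt_expMovingAverage hω hint s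
  have hOcont : Continuous O := by
    rw [funext hO]
    exact hω.sub (continuous_iff_continuousAt.2 fun s => (hderiv s).continuousAt)
  have hFTC : ∀ t, ∫ s in (0:ℝ)..t, O s = expMovingAverage ω t - expMovingAverage ω 0 :=
    fun t => intervalIntegral.integral_eq_sub_of_hasDerivAt (fun s _ => hderiv s)
      (hOcont.intervalIntegrable _ _)
  have hlim := (tendsto_expMovingAverage_div_atTop hω hint hsub).sub
    ((tendsto_const_nhds (x := expMovingAverage ω 0)).div_atTop tendsto_id)
  rw [sub_zero] at hlim
  refine hlim.congr fun t => ?_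
  rw [hFTC, id]
  ring

/-- The time average of the Ornstein–Uhlenbeck process vanishes at `+∞`. -/
theorem stmt_4 (ω : ℝ → ℝ) (hω : Continuous ω) (K : ℝ) (hK : 0 < K)
    (hbd : ∀ t : ℝ, |ω t| ≤ K * (1 + t ^ 2))
    (hsub : Tendsto (fun t : ℝ => ω t / t) atTop (nhds 0))
    (O : ℝ → ℝ)
    (hO : ∀ s : ℝ, O s = ω s - ∫ r in Set.Iic s, Real.exp (r - s) * ω r) :
    Tendsto (fun t : ℝ => (1 / t) * ∫ s in (0:ℝ)..t, O s) atTop (nhds 0) :=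
  stmt_4_general ω hω K hbd hsub O hO
end

section
/- Let L > 0, let f : ℝ^d → ℝ^d satisfy the one-sided dissipative Lipschitz condition with constant L, let a ∈ ℝ with a ≠ 0, b ∈ ℝ^d, and let O : ℝ → ℝ be continuous with (1/t)∫_0^t O(τ) dτ → 0 as t → +∞. Let U₁, U₂ : [0, ∞) → ℝ^d be differentiable with U_i'(t) = e^{−aO(t)} f(e^{aO(t)} U_i(t) + (b/a)(e^{aO(t)} − 1)) + (a U_i(t) + b) O(t) for i = 1, 2 and all t ≥ 0. Then ‖U₁(t) − U₂(t)‖² → 0 as t → +∞, i.e. any two solutions converge pathwise to each other forward in time. -/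
/-!
The difference `u = U₁ - U₂` satisfies `⟪u, u'⟫ ≤ (a O(t) - L) ‖u‖²`: the conjugation by the
homothety `x ↦ e^{aO(t)} x + const` preserves the dissipativity constant `-L` of `f`, and the
linear term `O(t) a U` adds `a O(t)`. By Grönwall, `‖u t‖² ≤ ‖u 0‖² exp (2 ∫₀ᵗ (a O - L))`, and the
exponent behaves like `t (2a · (1/t)∫₀ᵗ O - 2L) → -∞`.
-/

open Real Filter RealInnerProductSpace

theorem le_mul_exp_integral_of_hasDerivAt_le {V V' g : ℝ → ℝ} (hg : Continuous g)
    (hV : ∀ t, 0 ≤ t → HasDerivAt V (V' t) t) (hV' : ∀ t, 0 ≤ t → V' t ≤ g t * V t)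
    {t : ℝ} (ht : 0 ≤ t) : V t ≤ V 0 * exp (∫ τ in (0:ℝ)..t, g τ) := by
  set G : ℝ → ℝ := fun t => ∫ τ in (0:ℝ)..t, g τ
  have hW : ∀ s, 0 ≤ s → HasDerivAt (fun s => V s * exp (-G s))
      (V' s * exp (-G s) + V s * (exp (-G s) * -g s)) s := fun s hs =>
    (hV s hs).mul (hg.integral_hasStrictDerivAt 0 s).hasDerivAt.neg.exp
  -- `V * exp (-G)` is antitone, since its derivative is `(V' - g V) exp (-G) ≤ 0`.
  have hanti : AntitoneOn (fun s => V s * exp (-G s)) (Set.Ici 0) := by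
    refine antitoneOn_of_hasDerivWithinAt_nonpos
      (f' := fun s => V' s * exp (-G s) + V s * (exp (-G s) * -g s)) (convex_Ici 0)
      (fun s hs => (hW s hs).continuousAt.continuousWithinAt) (fun s hs => ?_) fun s hs => ?_
    · rw [interior_Ici] at hs
      exact (hW s hs.le).hasDerivWithinAt
    · rw [interior_Ici] at hs
      nlinarith [hV' s hs.le, exp_pos (-G s)]
  have h := hanti Set.self_mem_Ici ht ht
  simp only [G, intervalIntegral.integral_same, neg_zero, exp_zero, mul_one] at h
  rwa [exp_neg, ← div_eq_mul_inv, div_le_iff₀ (exp_pos _)] at h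

theorem tendsto_intervalIntegral_atBot_of_average {h : ℝ → ℝ} {ℓ : ℝ} (hℓ : ℓ < 0)
    (havg : Tendsto (fun t => (1 / t) * ∫ τ in (0:ℝ)..t, h τ) atTop (nhds ℓ)) :
    Tendsto (fun t => ∫ τ in (0:ℝ)..t, h τ) atTop atBot := by
  refine (tendsto_id.atTop_mul_neg hℓ havg).congr' ?_
  filter_upwards [eventually_gt_atTop 0] with t ht
  simp [ht.ne']

theorem tendsto_average_const_mul_add {h : ℝ → ℝ} {ℓ : ℝ} (hh : Continuous h)
    (havg : Tendsto (fun t => (1 / t) * ∫ τ in (0:ℝ)..t, h τ) atTop (nhds ℓ)) (α β : ℝ) :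
    Tendsto (fun t => (1 / t) * ∫ τ in (0:ℝ)..t, (α * h τ + β)) atTop (nhds (α * ℓ + β)) := by
  refine ((havg.const_mul α).add_const β).congr' ?_
  filter_upwards [eventually_gt_atTop 0] with t ht
  rw [intervalIntegral.integral_add ((hh.intervalIntegrable _ _).const_mul α)
    intervalIntegrable_const, intervalIntegral.integral_const_mul, intervalIntegral.integral_const]
  field_simp
  simp

section OneSidedLipschitz

variable {E : Type*} [NormedAddCommGroup E] [InnerProductSpace ℝ E]

def OneSidedLipschitzWith (K : ℝ) (f : E → E) : Prop :=
  ∀ x y, ⟪x - y, f x - f y⟫ ≤ K * ‖x - y‖ ^ 2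

namespace OneSidedLipschitzWith

variable {K K' : ℝ} {f g : E → E}

theorem add (hf : OneSidedLipschitzWith K f) (hg : OneSidedLipschitzWith K' g) :
    OneSidedLipschitzWith (K + K') (f + g) := fun x y => by
  have h := add_le_add (hf x y) (hg x y)
  rw [← inner_add_right] at h
  simpa only [Pi.add_apply, add_sub_add_comm, add_mul] using h

theorem comp_homothety (hf : OneSidedLipschitzWith K f) {c : ℝ} (hc : 0 < c) (w : E) :
    OneSidedLipschitzWith K (fun x => c⁻¹ • f (c • x + w)) := fun x y => by
  have h := hf (c • x + w) (c • y + w)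
  rw [add_sub_add_right_eq_sub, ← smul_sub, real_inner_smul_left, norm_smul,
    Real.norm_of_nonneg hc.le, mul_pow] at h
  rw [← smul_sub, real_inner_smul_right]
  have : ⟪x - y, f (c • x + w) - f (c • y + w)⟫ ≤ c * (K * ‖x - y‖ ^ 2) := by
    nlinarith
  calc c⁻¹ * ⟪x - y, f (c • x + w) - f (c • y + w)⟫ ≤ c⁻¹ * (c * (K * ‖x - y‖ ^ 2)) :=
        mul_le_mul_of_nonneg_left this (inv_nonneg.2 hc.le)
    _ = K * ‖x - y‖ ^ 2 := by field_simp

end OneSidedLipschitzWith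

theorem oneSidedLipschitzWith_smul_smul_add (s r : ℝ) (z : E) :
    OneSidedLipschitzWith (s * r) (fun x : E => s • (r • x + z)) := fun x y => by
  rw [← smul_sub, add_sub_add_right_eq_sub, ← smul_sub, smul_smul, real_inner_smul_right,
    real_inner_self_eq_norm_sq]

noncomputable def transformedField (f : E → E) (a : ℝ) (b : E) (o : ℝ) (U : E) : E :=
  Real.exp (-(a * o)) • f (Real.exp (a * o) • U + (Real.exp (a * o) - 1) • (a⁻¹ • b))
    + o • (a • U + b)

theorem OneSidedLipschitzWith.transformedField {K : ℝ} {f : E → E}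
    (hf : OneSidedLipschitzWith K f) (a : ℝ) (b : E) (o : ℝ) :
    OneSidedLipschitzWith (K + o * a) (transformedField f a b o) := by
  have h := (hf.comp_homothety (exp_pos (a * o)) ((Real.exp (a * o) - 1) • (a⁻¹ • b))).add
    (oneSidedLipschitzWith_smul_smul_add o a b)
  rwa [← Real.exp_neg] at h

theorem sq_norm_sub_le_of_oneSidedLipschitzWith {F : ℝ → E → E} {k : ℝ → ℝ}
    (hk : Continuous k) (hF : ∀ t, 0 ≤ t → OneSidedLipschitzWith (k t) (F t))
    {U₁ U₂ : ℝ → E} (hU₁ : ∀ t, 0 ≤ t → HasDerivAt U₁ (F t (U₁ t)) t)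
    (hU₂ : ∀ t, 0 ≤ t → HasDerivAt U₂ (F t (U₂ t)) t) {t : ℝ} (ht : 0 ≤ t) :
    ‖U₁ t - U₂ t‖ ^ 2 ≤ ‖U₁ 0 - U₂ 0‖ ^ 2 * exp (∫ τ in (0:ℝ)..t, 2 * k τ) := by
  refine le_mul_exp_integral_of_hasDerivAt_le (hk.const_mul 2)
    (fun s hs => ((hU₁ s hs).sub (hU₂ s hs)).norm_sq) (fun s hs => ?_) ht
  have := hF s hs (U₁ s) (U₂ s)
  simp only [Pi.sub_apply]
  linarith

end OneSidedLipschitz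

theorem stmt_12_general {d : ℕ} (L : ℝ) (hL : 0 < L)
    (f : EuclideanSpace ℝ (Fin d) → EuclideanSpace ℝ (Fin d))
    (hf : ∀ x y : EuclideanSpace ℝ (Fin d), ⟪x - y, f x - f y⟫ ≤ -L * ‖x - y‖ ^ 2)
    (a : ℝ) (b : EuclideanSpace ℝ (Fin d))
    (O : ℝ → ℝ) (hO : Continuous O)
    (hOavg : Tendsto (fun t : ℝ => (1 / t) * ∫ τ in (0:ℝ)..t, O τ) atTop (nhds 0))
    (U₁ U₂ : ℝ → EuclideanSpace ℝ (Fin d))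
    (hU₁ : ∀ t : ℝ, 0 ≤ t → HasDerivAt U₁
      (Real.exp (-(a * O t)) •
          f (Real.exp (a * O t) • U₁ t + (Real.exp (a * O t) - 1) • (a⁻¹ • b))
        + O t • (a • U₁ t + b)) t)
    (hU₂ : ∀ t : ℝ, 0 ≤ t → HasDerivAt U₂
      (Real.exp (-(a * O t)) •
          f (Real.exp (a * O t) • U₂ t + (Real.exp (a * O t) - 1) • (a⁻¹ • b))
        + O t • (a • U₂ t + b)) t) :
    Tendsto (fun t : ℝ => ‖U₁ t - U₂ t‖ ^ 2) atTop (nhds 0) := by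
  have hbound : ∀ t, 0 ≤ t → ‖U₁ t - U₂ t‖ ^ 2 ≤
      ‖U₁ 0 - U₂ 0‖ ^ 2 * exp (∫ τ in (0:ℝ)..t, 2 * (-L + O τ * a)) := fun t ht =>
    sq_norm_sub_le_of_oneSidedLipschitzWith (F := fun t => transformedField f a b (O t))
      (continuous_const.add (hO.mul continuous_const))
      (fun t _ => OneSidedLipschitzWith.transformedField hf a b (O t)) hU₁ hU₂ ht
  have hexponent : Tendsto (fun t => ∫ τ in (0:ℝ)..t, 2 * (-L + O τ * a)) atTop atBot := by
    have havg := tendsto_average_const_mul_add hO hOavg (2 * a) (2 * -L)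
    simp only [mul_zero, zero_add] at havg
    refine tendsto_intervalIntegral_atBot_of_average (ℓ := 2 * -L) (by linarith) ?_
    convert havg using 5
    ring
  refine squeeze_zero' (Eventually.of_forall fun t => by positivity)
    ((eventually_ge_atTop 0).mono hbound) ?_
  simpa using (tendsto_exp_atBot.comp hexponent).const_mul (‖U₁ 0 - U₂ 0‖ ^ 2)

/-- Pathwise convergence of any two solutions of the transformed random
differential equation when the time average of `O` vanishes. -/
theorem stmt_12 {d : ℕ} (L : ℝ) (hL : 0 < L)
    (f : EuclideanSpace ℝ (Fin d) → EuclideanSpace ℝ (Fin d))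
    (hf : ∀ x y : EuclideanSpace ℝ (Fin d), ⟪x - y, f x - f y⟫ ≤ -L * ‖x - y‖ ^ 2)
    (a : ℝ) (ha : a ≠ 0) (b : EuclideanSpace ℝ (Fin d))
    (O : ℝ → ℝ) (hO : Continuous O)
    (hOavg : Tendsto (fun t : ℝ => (1 / t) * ∫ τ in (0:ℝ)..t, O τ) atTop (nhds 0))
    (U₁ U₂ : ℝ → EuclideanSpace ℝ (Fin d))
    (hU₁ : ∀ t : ℝ, 0 ≤ t → HasDerivAt U₁
      (Real.exp (-(a * O t)) •
          f (Real.exp (a * O t) • U₁ t + (Real.exp (a * O t) - 1) • (a⁻¹ • b))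
        + O t • (a • U₁ t + b)) t)
    (hU₂ : ∀ t : ℝ, 0 ≤ t → HasDerivAt U₂
      (Real.exp (-(a * O t)) •
          f (Real.exp (a * O t) • U₂ t + (Real.exp (a * O t) - 1) • (a⁻¹ • b))
        + O t • (a • U₂ t + b)) t) :
    Tendsto (fun t : ℝ => ‖U₁ t - U₂ t‖ ^ 2) atTop (nhds 0) :=
  stmt_12_general L hL f hf a b O hO hOavg U₁ U₂ hU₁ hU₂
end
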